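/- arXiv:1402.0441 — 3 statements merged into one kernel-verified Lean document; each statement's English description precedes it below -/
import Mathlib

section
/- Let x : ℕ → ℓ₁ be the Rademacher-type sequence defined in the context. If X ⊆ ℕ is such that ∑_{i∈X} x_i converges unconditionally in ℓ₁, then ∑_{n∈A_X} 1/(n+1) < ∞, where A_X = {n ∈ ℕ : P_n ∩ X ≠ ∅}. -/
/-!
Pick one index `σ n ∈ P_n ∩ X` for every `n ∈ A_X`. As a subfamily of a summable family,
`(x (σ n))` is summable. These vectors have pairwise disjoint supports (`x (σ n)` lives on `Q_n`),
and for disjointly supported vectors of `ℓ¹` every finite sum of norms is dominated by the norm of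
the total sum, so `∑ ‖x (σ n)‖ < ∞`. Finally `‖x i‖ ≥ 1/n ≥ 1/(n+1)` for `i ∈ P_n`: the `2ⁿ`
coordinates of `x i` on `Q_n` all have absolute value `1/(n 2ⁿ)`.
-/

open Function Set

namespace lp

variable {ι α E : Type*} [NormedAddCommGroup E]

lemma sum_norm_le_norm_tsum_of_pairwise_disjoint_support {y : ι → lp (fun _ : α => E) 1}
    (hy : Summable y) (hdisj : Pairwise (Disjoint on fun n => support (y n))) (s : Finset ι) :
    ∑ n ∈ s, ‖y n‖ ≤ ‖∑' n, y n‖ := by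
  classical
  have hcoord (a : α) : (∑' n, y n) a = ∑' n, y n a :=
    hy.map_tsum ((Pi.evalAddMonoidHom (fun _ => E) a).comp (coeFnAddMonoidHom _ 1))
      ((continuous_apply a).comp uniformContinuous_coe.continuous)
  have hpoint (a : α) : ∑ n ∈ s, ‖y n a‖ ≤ ‖(∑' n, y n) a‖ := by
    by_cases h : ∃ m, y m a ≠ 0
    · obtain ⟨m, hm⟩ := h
      have hzero (n : ι) (hn : n ≠ m) : y n a = 0 :=
        notMem_support.mp fun ha => (hdisj hn).ne_of_mem ha hm rfl
      calc ∑ n ∈ s, ‖y n a‖ ≤ ∑ n ∈ insert m s, ‖y n a‖ :=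
            Finset.sum_le_sum_of_subset_of_nonneg (Finset.subset_insert m s)
              fun _ _ _ => norm_nonneg _
        _ = ‖y m a‖ := Finset.sum_eq_single_of_mem m (Finset.mem_insert_self m s)
            fun n _ hn => by simp [hzero n hn]
        _ = ‖(∑' n, y n) a‖ := by rw [hcoord, tsum_eq_single m hzero]
    · simp [not_exists_not.mp h]
  have hsummable (f : lp (fun _ : α => E) 1) : Summable fun a => ‖f a‖ := by
    simpa using (lp.memℓp f).summable (by norm_num)
  have hnorm (f : lp (fun _ : α => E) 1) : ‖f‖ = ∑' a, ‖f a‖ := by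
    rw [norm_eq_tsum_rpow (by norm_num)]; simp
  calc ∑ n ∈ s, ‖y n‖ = ∑' a, ∑ n ∈ s, ‖y n a‖ := by
        simp_rw [hnorm]; exact (Summable.tsum_finsetSum fun n _ => hsummable (y n)).symm
    _ ≤ ∑' a, ‖(∑' n, y n) a‖ :=
        Summable.tsum_le_tsum hpoint (summable_sum fun n _ => hsummable (y n)) (hsummable _)
    _ = ‖∑' n, y n‖ := (hnorm _).symm

theorem summable_norm_of_pairwise_disjoint_support {y : ι → lp (fun _ : α => E) 1}
    (hy : Summable y) (hdisj : Pairwise (Disjoint on fun n => support (y n))) :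
    Summable fun n => ‖y n‖ :=
  summable_of_sum_le (fun _ => norm_nonneg _)
    (sum_norm_le_norm_tsum_of_pairwise_disjoint_support hy hdisj)

end lp

lemma add_one_mul_add_two_div_two (n : ℕ) : (n + 1) * (n + 2) / 2 = n * (n + 1) / 2 + (n + 1) := by
  have h2 : 2 ∣ n * (n + 1) := (Nat.even_mul_succ_self n).two_dvd
  have h : (n + 1) * (n + 2) = n * (n + 1) + 2 * (n + 1) := by ring
  omega

lemma pairwise_disjoint_Ico_triangle :
    Pairwise (Disjoint on fun n : ℕ => Ico (n * (n + 1) / 2) ((n + 1) * (n + 2) / 2)) := by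
  have hmono : Monotone fun n : ℕ => n * (n + 1) / 2 := fun m n h =>
    Nat.div_le_div_right (Nat.mul_le_mul h (by omega))
  simpa using hmono.pairwise_disjoint_on_Ico_succ

lemma pairwise_disjoint_Ico_two_pow_sub_one :
    Pairwise (Disjoint on fun n : ℕ => Ico (2 ^ n - 1) (2 ^ (n + 1) - 1)) := by
  have hmono : Monotone fun n : ℕ => 2 ^ n - 1 := fun m n h =>
    Nat.sub_le_sub_right (Nat.pow_le_pow_right two_pos h) 1
  simpa using hmono.pairwise_disjoint_on_Ico_succ

lemma exists_eq_add_of_mem_Ico_triangle {n i : ℕ}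
    (hi : i ∈ Ico (n * (n + 1) / 2) ((n + 1) * (n + 2) / 2)) :
    ∃ j ≤ n, i = n * (n + 1) / 2 + j := by
  rw [mem_Ico, add_one_mul_add_two_div_two] at hi
  exact ⟨i - n * (n + 1) / 2, by omega, by omega⟩

lemma support_subset_Ico_of_mem_Ico_triangle (x : ℕ → lp (fun _ : ℕ => ℝ) 1)
    (hx0 : ∀ k : ℕ, (x 0 : ℕ → ℝ) k = if k = 0 then 1 else 0)
    (hxsupp : ∀ n : ℕ, 1 ≤ n → ∀ j : ℕ, j ≤ n → ∀ m : ℕ,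
      (m < 2 ^ n - 1 ∨ 2 ^ (n + 1) - 1 ≤ m) →
      (x (n * (n + 1) / 2 + j) : ℕ → ℝ) m = 0)
    {n i : ℕ} (hi : i ∈ Ico (n * (n + 1) / 2) ((n + 1) * (n + 2) / 2)) :
    support (x i) ⊆ Ico (2 ^ n - 1) (2 ^ (n + 1) - 1) := by
  obtain ⟨j, hj, rfl⟩ := exists_eq_add_of_mem_Ico_triangle hi
  intro m hm
  rcases Nat.eq_zero_or_pos n with rfl | hn
  · obtain rfl : j = 0 := by omega
    by_contra hm0
    exact hm (by simp_all)
  · by_contra hmQ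
    exact hm (hxsupp n hn j hj m (by rw [mem_Ico] at hmQ; omega))

lemma inv_succ_le_norm_of_mem_Ico_triangle (x : ℕ → lp (fun _ : ℕ => ℝ) 1)
    (hx0 : ∀ k : ℕ, (x 0 : ℕ → ℝ) k = if k = 0 then 1 else 0)
    (hx : ∀ n : ℕ, 1 ≤ n → ∀ j : ℕ, j ≤ n → ∀ k : ℕ, k < 2 ^ n →
      (x (n * (n + 1) / 2 + j) : ℕ → ℝ) (2 ^ n - 1 + k) =
        (-1 : ℝ) ^ (k / 2 ^ (n - j)) / ((n : ℝ) * 2 ^ n))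
    {n i : ℕ} (hi : i ∈ Ico (n * (n + 1) / 2) ((n + 1) * (n + 2) / 2)) :
    1 / ((n : ℝ) + 1) ≤ ‖x i‖ := by
  obtain ⟨j, hj, rfl⟩ := exists_eq_add_of_mem_Ico_triangle hi
  rcases Nat.eq_zero_or_pos n with rfl | hn
  · obtain rfl : j = 0 := by omega
    simpa [hx0] using lp.norm_apply_le_norm one_ne_zero (x 0) 0
  have hblock : ∑ k ∈ Finset.range (2 ^ n), ‖(x (n * (n + 1) / 2 + j) : ℕ → ℝ) (2 ^ n - 1 + k)‖
      = 1 / n := by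
    rw [Finset.sum_congr rfl fun k hk => by rw [hx n hn j hj k (Finset.mem_range.mp hk)]]
    simp [norm_div, field]
  calc 1 / ((n : ℝ) + 1) ≤ 1 / n := by gcongr; linarith
    _ = _ := hblock.symm
    _ ≤ ‖x (n * (n + 1) / 2 + j)‖ := by
      simpa [Finset.sum_map] using lp.sum_rpow_le_norm_rpow (p := 1) (by norm_num)
        (x (n * (n + 1) / 2 + j)) ((Finset.range (2 ^ n)).map (addLeftEmbedding (2 ^ n - 1)))

/-- for the Rademacher-type sequence `x : ℕ → ℓ₁` (described by the
hypotheses `hx0`, `hx`, `hxsupp`: `x 0 = e₀`, and for `n ≥ 1`, `0 ≤ j ≤ n`, the element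
`i = n(n+1)/2 + j` of `P_n` has `x i` supported on `Q_n = [2ⁿ−1, 2ⁿ⁺¹−1)` with values
`(−1)^{⌊k/2^{n−j}⌋}/(n·2ⁿ)`), if `∑_{i∈X} x i` converges unconditionally in `ℓ₁`, then
`∑_{n ∈ A_X} 1/(n+1) < ∞`, where `A_X = {n : P_n ∩ X ≠ ∅}`. -/
theorem stmt17 (x : ℕ → lp (fun _ : ℕ => ℝ) 1)
    (hx0 : ∀ k : ℕ, (x 0 : ℕ → ℝ) k = if k = 0 then 1 else 0)
    (hx : ∀ n : ℕ, 1 ≤ n → ∀ j : ℕ, j ≤ n → ∀ k : ℕ, k < 2 ^ n →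
      (x (n * (n + 1) / 2 + j) : ℕ → ℝ) (2 ^ n - 1 + k) =
        (-1 : ℝ) ^ (k / 2 ^ (n - j)) / ((n : ℝ) * 2 ^ n))
    (hxsupp : ∀ n : ℕ, 1 ≤ n → ∀ j : ℕ, j ≤ n → ∀ m : ℕ,
      (m < 2 ^ n - 1 ∨ 2 ^ (n + 1) - 1 ≤ m) →
      (x (n * (n + 1) / 2 + j) : ℕ → ℝ) m = 0)
    (X : Set ℕ)
    (hX : Summable (fun i : X => x i)) :
    Summable (fun n : {n : ℕ | (Set.Ico (n * (n + 1) / 2) ((n + 1) * (n + 2) / 2) ∩ X).Nonempty} =>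
      (1 : ℝ) / ((n : ℕ) + 1)) := by
  set A := {n : ℕ | (Ico (n * (n + 1) / 2) ((n + 1) * (n + 2) / 2) ∩ X).Nonempty}
  let σ : A → X := fun n => ⟨n.2.some, n.2.some_mem.2⟩
  have hσ_mem (n : A) : (σ n : ℕ) ∈ Ico ((n : ℕ) * (n + 1) / 2) (((n : ℕ) + 1) * (n + 2) / 2) :=
    n.2.some_mem.1
  have hσ : Injective σ := fun m n h => Subtype.ext <| by
    by_contra hmn
    exact (pairwise_disjoint_Ico_triangle hmn).ne_of_mem (hσ_mem m) (h ▸ hσ_mem n) rfl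
  have hdisj : Pairwise (Disjoint on fun n : A => support (x (σ n))) := fun m n hmn =>
    (pairwise_disjoint_Ico_two_pow_sub_one (Subtype.coe_ne_coe.mpr hmn)).mono
      (support_subset_Ico_of_mem_Ico_triangle x hx0 hxsupp (hσ_mem m))
      (support_subset_Ico_of_mem_Ico_triangle x hx0 hxsupp (hσ_mem n))
  have hnorm : Summable fun n : A => ‖x (σ n)‖ :=
    lp.summable_norm_of_pairwise_disjoint_support (hX.comp_injective hσ) hdisj
  exact hnorm.of_nonneg_of_le (fun n => by positivity)
    fun n => inv_succ_le_norm_of_mem_Ico_triangle x hx0 hx (hσ_mem n)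
end

section
/- Let x : ℕ → ℓ₁ be the Rademacher-type sequence defined in the context. If X ⊆ ℕ is such that ∑_{n∈A_X} 1/√(n+1) < ∞, where A_X = {n ∈ ℕ : P_n ∩ X ≠ ∅}, then ∑_{i∈X} x_i converges unconditionally in ℓ₁. -/
/-!
The vectors `x_i`, `i ∈ P_n`, are multiples of distinct Rademacher functions on the `2^n`
points of `Q_n`, hence orthogonal. So the ℓ² norm of a partial sum over `P_n` is at most
`√(n+1)` times that of a single one, and by Cauchy–Schwarz on `2^n` points its ℓ¹ norm is at
most `√(n+1)/n ≤ 2/√(n+1)`. Grouping the indices of a finite subset of `X` by block, the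
Cauchy criterion for `∑_{i∈X} x_i` then follows from that of `2 ∑_{n∈A_X} 1/√(n+1)`.
-/

open Filter Finset

theorem summable_of_norm_sum_fiber_le {ι β E : Type*} [SeminormedAddCommGroup E]
    [CompleteSpace E] {f : ι → E} {b : ι → β} (hb : Tendsto b cofinite cofinite) {c : β → ℝ}
    (hc : Summable c)
    (hfiber : ∀ᶠ n in cofinite, ∀ s : Finset ι, (∀ i ∈ s, b i = n) → ‖∑ i ∈ s, f i‖ ≤ c n) :
    Summable f := by
  classical
  refine summable_iff_vanishing_norm.2 fun ε hε => ?_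
  obtain ⟨u, hu⟩ := summable_iff_vanishing_norm.1 hc ε hε
  set bad := (eventually_cofinite.1 hfiber).toFinset
  have : TendstoCofinite b := ⟨hb⟩
  have hfin := TendstoCofinite.finite_preimage b (u ∪ bad).finite_toSet
  refine ⟨hfin.toFinset, fun t ht => ?_⟩
  have hgood : ∀ n ∈ t.image b, n ∉ u ∧ n ∉ bad := by
    simp only [mem_image]
    rintro n ⟨i, hi, rfl⟩
    simpa using disjoint_left.1 ht hi
  calc ‖∑ i ∈ t, f i‖ = ‖∑ n ∈ t.image b, ∑ i ∈ t with b i = n, f i‖ := by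
        rw [sum_fiberwise_of_maps_to fun i hi => mem_image_of_mem b hi]
    _ ≤ ∑ n ∈ t.image b, c n := by
        refine norm_sum_le_of_le _ fun n hn => ?_
        have hn' : n ∉ bad := (hgood n hn).2
        simp only [bad, Set.Finite.mem_toFinset, Set.mem_ofPred_eq, not_not] at hn'
        exact hn' _ fun i hi => (mem_filter.1 hi).2
    _ ≤ ‖∑ n ∈ t.image b, c n‖ := Real.le_norm_self _
    _ < ε := hu _ (disjoint_left.2 fun n hn => (hgood n hn).1)

def triangle (n : ℕ) : ℕ := n * (n + 1) / 2

theorem triangle_succ (n : ℕ) : triangle (n + 1) = triangle n + (n + 1) := by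
  simp only [triangle]
  have := Nat.two_mul_div_two_of_even (Nat.even_mul_succ_self n)
  have := Nat.two_mul_div_two_of_even (Nat.even_mul_succ_self (n + 1))
  nlinarith

theorem triangle_mono : Monotone triangle :=
  monotone_nat_of_le_succ fun n => by rw [triangle_succ]; omega

theorem self_le_triangle (n : ℕ) : n ≤ triangle n := by
  induction n with
  | zero => exact le_rfl
  | succ k ih => rw [triangle_succ]; omega

def triangleIndex (i : ℕ) : ℕ := Nat.findGreatest (fun n => triangle n ≤ i) i

theorem triangle_triangleIndex_le (i : ℕ) : triangle (triangleIndex i) ≤ i :=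
  Nat.findGreatest_spec (P := fun n => triangle n ≤ i) (Nat.zero_le i) (Nat.zero_le i)

theorem le_triangleIndex {n i : ℕ} (h : triangle n ≤ i) : n ≤ triangleIndex i :=
  Nat.le_findGreatest ((self_le_triangle n).trans h) h

theorem triangleIndex_eq_iff {i n : ℕ} :
    triangleIndex i = n ↔ triangle n ≤ i ∧ i < triangle (n + 1) := by
  constructor
  · rintro rfl
    refine ⟨triangle_triangleIndex_le i, lt_of_not_ge fun h => ?_⟩
    exact (le_triangleIndex h).not_gt (Nat.lt_succ_self _)
  · rintro ⟨h₁, h₂⟩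
    refine le_antisymm ?_ (le_triangleIndex h₁)
    by_contra! h
    exact h₂.not_ge ((triangle_mono h).trans (triangle_triangleIndex_le i))

theorem tendsto_triangleIndex : Tendsto triangleIndex cofinite cofinite := by
  rw [Nat.cofinite_eq_atTop]
  exact tendsto_atTop_atTop.2 fun n => ⟨triangle n, fun i => le_triangleIndex⟩

def rademacher (a k : ℕ) : ℝ := (-1) ^ (k / 2 ^ a)

theorem rademacher_eq_ite (a k : ℕ) : rademacher a k = if k.testBit a then -1 else 1 := by
  rw [rademacher, Nat.testBit_eq_decide_div_mod_eq]
  rcases Nat.mod_two_eq_zero_or_one (k / 2 ^ a) with h | h <;>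
    simp [h, neg_one_pow_eq_ite, Nat.even_iff]

theorem rademacher_mul_self (a k : ℕ) : rademacher a k * rademacher a k = 1 := by
  rw [rademacher_eq_ite]; split_ifs <;> norm_num

theorem rademacher_xor_two_pow (a b k : ℕ) :
    rademacher b (k ^^^ 2 ^ a) = if a = b then -rademacher b k else rademacher b k := by
  simp only [rademacher_eq_ite, Nat.testBit_xor, Nat.testBit_two_pow]
  by_cases h : a = b <;> cases k.testBit b <;> simp [h]

theorem sum_rademacher_mul_rademacher {n a b : ℕ} (ha : a < n) (hab : a ≠ b) :
    ∑ k ∈ range (2 ^ n), rademacher a k * rademacher b k = 0 := by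
  refine sum_involution (fun k _ => k ^^^ 2 ^ a) (fun k _ => ?_) (fun k _ _ h => ?_)
    (fun k hk => ?_) (fun k _ => by simp)
  · simp [rademacher_xor_two_pow, hab]
  · have hflip := rademacher_xor_two_pow a a k
    rw [h, if_pos rfl] at hflip
    have : rademacher a k = 0 := by linarith
    simpa [this] using rademacher_mul_self a k
  · rw [mem_range] at hk ⊢
    exact Nat.xor_lt_two_pow hk (Nat.pow_lt_pow_right one_lt_two ha)

theorem sum_rademacher_mul_rademacher_of_le {n a b : ℕ} (ha : a ≤ n) (hb : b ≤ n)
    (hab : a ≠ b) :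
    ∑ k ∈ range (2 ^ n), rademacher a k * rademacher b k = 0 := by
  rcases hab.lt_or_gt with h | h
  · exact sum_rademacher_mul_rademacher (h.trans_le hb) hab
  · simpa only [mul_comm] using sum_rademacher_mul_rademacher (h.trans_le ha) hab.symm

theorem sum_sq_sum_rademacher {n : ℕ} {S : Finset ℕ} (hS : S ⊆ range (n + 1)) :
    ∑ k ∈ range (2 ^ n), (∑ a ∈ S, rademacher a k) ^ 2 = #S * 2 ^ n := by
  have hle : ∀ a ∈ S, a ≤ n := fun a ha => Nat.lt_succ_iff.1 (mem_range.1 (hS ha))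
  calc ∑ k ∈ range (2 ^ n), (∑ a ∈ S, rademacher a k) ^ 2
      = ∑ a ∈ S, ∑ b ∈ S, ∑ k ∈ range (2 ^ n), rademacher a k * rademacher b k := by
        simp_rw [sq, sum_mul_sum]
        rw [sum_comm]
        exact sum_congr rfl fun _ _ => sum_comm
    _ = ∑ a ∈ S, (2 ^ n : ℝ) := sum_congr rfl fun a ha => by
        rw [sum_eq_single_of_mem a ha fun b hb hba =>
          sum_rademacher_mul_rademacher_of_le (hle a ha) (hle b hb) hba.symm]
        simp [rademacher_mul_self]
    _ = #S * 2 ^ n := by rw [sum_const, nsmul_eq_mul]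

theorem sum_abs_sum_rademacher_le {n : ℕ} {S : Finset ℕ} (hS : S ⊆ range (n + 1)) :
    ∑ k ∈ range (2 ^ n), |∑ a ∈ S, rademacher a k| ≤ √(n + 1) * 2 ^ n := by
  have hcard : (#S : ℝ) ≤ n + 1 := by exact_mod_cast (card_le_card hS).trans_eq (card_range _)
  have hCS := sq_sum_le_card_mul_sum_sq (s := range (2 ^ n))
    (f := fun k => |∑ a ∈ S, rademacher a k|)
  simp only [sq_abs, card_range, sum_sq_sum_rademacher hS] at hCS
  refine le_of_sq_le_sq ?_ (by positivity)
  rw [mul_pow, Real.sq_sqrt (by positivity)]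
  push_cast at hCS
  nlinarith [pow_pos (two_pos (α := ℝ)) n]

theorem lp.norm_eq_sum_of_support_subset {ι : Type*} {E : ι → Type*}
    [∀ i, NormedAddCommGroup (E i)] (y : lp E 1) (s : Finset ι) (hs : ∀ i ∉ s, y i = 0) :
    ‖y‖ = ∑ i ∈ s, ‖y i‖ := by
  rw [lp.norm_eq_tsum_rpow (by norm_num), tsum_eq_sum (s := s) fun i hi => by simp [hs i hi]]
  simp

theorem norm_sum_le_of_rademacher_coords {n : ℕ} {S : Finset ℕ} (hS : S ⊆ range (n + 1))
    {v : ℕ → lp (fun _ : ℕ => ℝ) 1}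
    (hv : ∀ j ∈ S, ∀ k < 2 ^ n, v j (2 ^ n - 1 + k) = rademacher (n - j) k / (n * 2 ^ n))
    (hvsupp : ∀ j ∈ S, ∀ m, (m < 2 ^ n - 1 ∨ 2 ^ (n + 1) - 1 ≤ m) → v j m = 0) :
    ‖∑ j ∈ S, v j‖ ≤ √(n + 1) / n := by
  have happly (m : ℕ) : (∑ j ∈ S, v j : lp (fun _ : ℕ => ℝ) 1) m = ∑ j ∈ S, v j m := by
    rw [lp.coeFn_sum, Finset.sum_apply]
  have hsupp : ∀ m ∉ (range (2 ^ n)).map (addLeftEmbedding (2 ^ n - 1)),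
      (∑ j ∈ S, v j : lp (fun _ : ℕ => ℝ) 1) m = 0 := by
    intro m hm
    rw [happly]
    refine sum_eq_zero fun j hj => hvsupp j hj m ?_
    simp only [Finset.mem_map, mem_range, addLeftEmbedding_apply, not_exists, not_and] at hm
    have := hm (m - (2 ^ n - 1))
    have := Nat.one_le_two_pow (n := n)
    rw [pow_succ]
    omega
  have hexp : S.image (n - ·) ⊆ range (n + 1) := fun a ha => by
    obtain ⟨j, -, rfl⟩ := mem_image.1 ha
    exact mem_range.2 (by omega)
  calc ‖∑ j ∈ S, v j‖
      = ∑ k ∈ range (2 ^ n), |∑ j ∈ S, rademacher (n - j) k| / (n * 2 ^ n) := by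
        rw [lp.norm_eq_sum_of_support_subset _ _ hsupp, sum_map]
        refine sum_congr rfl fun k hk => ?_
        rw [addLeftEmbedding_apply, happly, sum_congr rfl fun j hj => hv j hj k (mem_range.1 hk),
          ← sum_div, Real.norm_eq_abs, abs_div,
          abs_of_nonneg (by positivity : (0 : ℝ) ≤ n * 2 ^ n)]
    _ = (∑ k ∈ range (2 ^ n), |∑ a ∈ S.image (n - ·), rademacher a k|) / (n * 2 ^ n) := by
        rw [sum_div]
        refine sum_congr rfl fun k _ => ?_
        rw [sum_image fun j hj j' hj' h => ?_]
        have := mem_range.1 (hS hj); have := mem_range.1 (hS hj')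
        omega
    _ ≤ √(n + 1) * 2 ^ n / (n * 2 ^ n) := by
        gcongr
        exact sum_abs_sum_rademacher_le hexp
    _ = √(n + 1) / n := mul_div_mul_right _ _ (by positivity)

theorem norm_sum_le_of_triangleIndex_eq {x : ℕ → lp (fun _ : ℕ => ℝ) 1}
    (hx : ∀ n : ℕ, 1 ≤ n → ∀ j : ℕ, j ≤ n → ∀ k : ℕ, k < 2 ^ n →
      (x (n * (n + 1) / 2 + j) : ℕ → ℝ) (2 ^ n - 1 + k) =
        (-1 : ℝ) ^ (k / 2 ^ (n - j)) / ((n : ℝ) * 2 ^ n))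
    (hxsupp : ∀ n : ℕ, 1 ≤ n → ∀ j : ℕ, j ≤ n → ∀ m : ℕ,
      (m < 2 ^ n - 1 ∨ 2 ^ (n + 1) - 1 ≤ m) →
      (x (n * (n + 1) / 2 + j) : ℕ → ℝ) m = 0)
    {n : ℕ} (hn : 1 ≤ n) {F : Finset ℕ} (hF : ∀ i ∈ F, triangleIndex i = n) :
    ‖∑ i ∈ F, x i‖ ≤ 2 / √(n + 1) := by
  have hblock (i) (hi : i ∈ F) := triangleIndex_eq_iff.1 (hF i hi)
  have hS : F.image (· - triangle n) ⊆ range (n + 1) := fun j hj => by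
    obtain ⟨i, hi, rfl⟩ := mem_image.1 hj
    have := hblock i hi
    rw [triangle_succ] at this
    exact mem_range.2 (by omega)
  have hreindex : ∑ i ∈ F, x i = ∑ j ∈ F.image (· - triangle n), x (triangle n + j) := by
    rw [sum_image fun i hi i' hi' h => by have := hblock i hi; have := hblock i' hi'; omega]
    exact sum_congr rfl fun i hi => by rw [Nat.add_sub_cancel' (hblock i hi).1]
  have hle (j) (hj : j ∈ F.image (· - triangle n)) : j ≤ n :=
    Nat.lt_succ_iff.1 (mem_range.1 (hS hj))
  calc ‖∑ i ∈ F, x i‖ ≤ √(n + 1) / n := by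
        rw [hreindex]
        exact norm_sum_le_of_rademacher_coords hS (fun j hj k hk => hx n hn j (hle j hj) k hk)
          (fun j hj m hm => hxsupp n hn j (hle j hj) m hm)
    _ ≤ 2 / √(n + 1) := by
        have : (1 : ℝ) ≤ n := by exact_mod_cast hn
        rw [div_le_div_iff₀ (by positivity) (by positivity), Real.mul_self_sqrt (by positivity)]
        linarith

theorem stmt18_general (x : ℕ → lp (fun _ : ℕ => ℝ) 1)
    (hx : ∀ n : ℕ, 1 ≤ n → ∀ j : ℕ, j ≤ n → ∀ k : ℕ, k < 2 ^ n →
      (x (n * (n + 1) / 2 + j) : ℕ → ℝ) (2 ^ n - 1 + k) =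
        (-1 : ℝ) ^ (k / 2 ^ (n - j)) / ((n : ℝ) * 2 ^ n))
    (hxsupp : ∀ n : ℕ, 1 ≤ n → ∀ j : ℕ, j ≤ n → ∀ m : ℕ,
      (m < 2 ^ n - 1 ∨ 2 ^ (n + 1) - 1 ≤ m) →
      (x (n * (n + 1) / 2 + j) : ℕ → ℝ) m = 0)
    (X : Set ℕ)
    (hAX : Summable
      (fun n : {n : ℕ | (Set.Ico (n * (n + 1) / 2) ((n + 1) * (n + 2) / 2) ∩ X).Nonempty} =>
        (1 : ℝ) / Real.sqrt ((n : ℕ) + 1))) :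
    Summable (fun i : X => x i) := by
  classical
  set A := {n : ℕ | (Set.Ico (n * (n + 1) / 2) ((n + 1) * (n + 2) / 2) ∩ X).Nonempty}
  have hc := ((summable_subtype_iff_indicator (s := A)
    (f := fun n : ℕ => (1 : ℝ) / √(n + 1))).1 hAX).mul_left 2
  refine summable_subtype_iff_indicator.2 <|
    summable_of_norm_sum_fiber_le tendsto_triangleIndex hc
      ((eventually_cofinite_ne 0).mono fun n hn F hF => ?_)
  have hsum : ∑ i ∈ F, X.indicator x i = ∑ i ∈ F with i ∈ X, x i := by
    rw [sum_filter]; rfl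
  by_cases hA : n ∈ A
  · rw [hsum, Set.indicator_of_mem hA, mul_one_div]
    exact norm_sum_le_of_triangleIndex_eq hx hxsupp (Nat.one_le_iff_ne_zero.2 hn)
      fun i hi => hF i (mem_filter.1 hi).1
  · have hempty : F.filter (· ∈ X) = ∅ := filter_eq_empty_iff.2 fun i hi hiX =>
      hA ⟨i, triangleIndex_eq_iff.1 (hF i hi), hiX⟩
    simp [hsum, hempty, hA]

/-- for the Rademacher-type sequence `x : ℕ → ℓ₁` (described by the
hypotheses `hx0`, `hx`, `hxsupp`), if `∑_{n ∈ A_X} 1/√(n+1) < ∞` where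
`A_X = {n : P_n ∩ X ≠ ∅}`, then `∑_{i∈X} x i` converges unconditionally in `ℓ₁`. -/
theorem stmt18 (x : ℕ → lp (fun _ : ℕ => ℝ) 1)
    (hx0 : ∀ k : ℕ, (x 0 : ℕ → ℝ) k = if k = 0 then 1 else 0)
    (hx : ∀ n : ℕ, 1 ≤ n → ∀ j : ℕ, j ≤ n → ∀ k : ℕ, k < 2 ^ n →
      (x (n * (n + 1) / 2 + j) : ℕ → ℝ) (2 ^ n - 1 + k) =
        (-1 : ℝ) ^ (k / 2 ^ (n - j)) / ((n : ℝ) * 2 ^ n))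
    (hxsupp : ∀ n : ℕ, 1 ≤ n → ∀ j : ℕ, j ≤ n → ∀ m : ℕ,
      (m < 2 ^ n - 1 ∨ 2 ^ (n + 1) - 1 ≤ m) →
      (x (n * (n + 1) / 2 + j) : ℕ → ℝ) m = 0)
    (X : Set ℕ)
    (hAX : Summable
      (fun n : {n : ℕ | (Set.Ico (n * (n + 1) / 2) ((n + 1) * (n + 2) / 2) ∩ X).Nonempty} =>
        (1 : ℝ) / Real.sqrt ((n : ℕ) + 1))) :
    Summable (fun i : X => x i) :=
  stmt18_general x hx hxsupp X hAX
end

section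
/- Let x : ℕ → ℓ₁ be the Rademacher-type sequence defined in the context, and let J_R = {X ⊆ ℕ : ∑_{i∈X} x_i converges unconditionally in ℓ₁}. Then J_R is not a summable ideal: there is no function g : ℕ → [0,∞) such that for every X ⊆ ℕ, X ∈ J_R if and only if ∑_{i∈X} g(i) < ∞. (Hence J_R is an ideal representable in ℓ₁ which is not representable in ℝ.) -/
/-!
Inside the block `P_n` the vectors `x_i` are `±1/(n 2^n)` on `Q_n` with mutually orthogonal sign
patterns, so by Cauchy–Schwarz every partial sum of one block has `ℓ¹`-norm at most `√(n+1)/n`;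
on the other hand one vector from each of several blocks gives disjointly supported vectors of
norm `1/n`.

Suppose `g ≥ 0` had the same summable subfamilies as `x`. Let `μ n` be the minimum of `g` on
`P_n` and `σ m` the sum of `μ` over the dyadic range `[2^m, 2^(m+1))`. If `σ` is small along a
subsequence, the minimisers in those dyadic ranges form a set on which `g` is summable but `x` is
not, since `∑ 1/n` over a dyadic range is at least `1/2`. Otherwise `σ m ≥ ε` frequently, and in
each such range some `n` has `(n+1) μ n ≥ ε`; on the union of these whole blocks `P_n` the block
norms decay geometrically, so `x` is summable while `g` is not.
-/

open Filter Finset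

local notation "ℓ¹" => lp (fun _ : ℕ => ℝ) 1

lemma Function.Injective.summable_range_iff {β γ E : Type*} [AddCommMonoid E]
    [TopologicalSpace E] {f : β → E} {i : γ → β} (hi : Function.Injective i) :
    Summable (fun b : Set.range i => f b) ↔ Summable (f ∘ i) :=
  (Equiv.ofInjective i hi).summable_iff.symm

def SummableSetsEq {ι E F : Type*} [AddCommMonoid E] [TopologicalSpace E] [AddCommMonoid F]
    [TopologicalSpace F] (x : ι → E) (y : ι → F) : Prop :=
  ∀ X : Set ι, Summable (fun i : X => x i) ↔ Summable (fun i : X => y i)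

lemma SummableSetsEq.summable_comp_iff {ι κ E F : Type*} [AddCommMonoid E] [TopologicalSpace E]
    [AddCommMonoid F] [TopologicalSpace F] {x : ι → E} {y : ι → F} (h : SummableSetsEq x y)
    {i : κ → ι} (hi : Function.Injective i) : Summable (x ∘ i) ↔ Summable (y ∘ i) := by
  rw [← hi.summable_range_iff, ← hi.summable_range_iff]
  exact h _

lemma summable_sigma_of_norm_sum_le {α E : Type*} {β : α → Type*} [∀ a, Fintype (β a)]
    [NormedAddCommGroup E] [CompleteSpace E] {f : (Σ a, β a) → E} {b : α → ℝ}
    (hb : Summable b) (hf : ∀ a (s : Finset (β a)), ‖∑ k ∈ s, f ⟨a, k⟩‖ ≤ b a) : Summable f := by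
  classical
  refine summable_iff_vanishing_norm.2 fun ε hε => ?_
  obtain ⟨A, hA⟩ := summable_iff_vanishing_norm.1 hb ε hε
  refine ⟨A.sigma fun _ => univ, fun t ht => ?_⟩
  have hfst : Disjoint (t.image Sigma.fst) A := disjoint_left.2 fun a ha haA => by
    obtain ⟨p, hp, rfl⟩ := mem_image.1 ha
    exact disjoint_left.1 ht hp (mem_sigma.2 ⟨haA, mem_univ _⟩)
  have hsum : ∑ p ∈ t, f p = ∑ a ∈ t.image Sigma.fst,
      ∑ k ∈ t.preimage (Sigma.mk a) sigma_mk_injective.injOn, f ⟨a, k⟩ := by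
    rw [← sum_sigma, sigma_image_fst_preimage_mk]
  calc ‖∑ p ∈ t, f p‖ ≤ ∑ a ∈ t.image Sigma.fst, b a := by
        rw [hsum]; exact (norm_sum_le _ _).trans (sum_le_sum fun a _ => hf a _)
    _ ≤ ‖∑ a ∈ t.image Sigma.fst, b a‖ := Real.le_norm_self _
    _ < ε := hA _ hfst

namespace lp

variable {α : Type*} {E : α → Type*} [∀ a, NormedAddCommGroup (E a)]

lemma sum_norm_le_norm (f : lp E 1) (s : Finset α) : ∑ a ∈ s, ‖f a‖ ≤ ‖f‖ := by
  simpa using lp.sum_rpow_le_norm_rpow (by simp) f s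

lemma norm_eq_sum_norm_of_support_subset (f : lp E 1) {s : Finset α} (hf : ∀ a ∉ s, f a = 0) :
    ‖f‖ = ∑ a ∈ s, ‖f a‖ := by
  rw [lp.norm_eq_tsum_rpow (by simp), tsum_eq_sum (s := s) fun a ha => by simp [hf a ha]]
  simp

end lp

-- `tri n` is the least element of `P_n` and `coordBlock n` is `Q_n`.
def tri (n : ℕ) : ℕ := n * (n + 1) / 2

lemma tri_add_lt_tri {n n' j : ℕ} (hj : j ≤ n) (h : n < n') : tri n + j < tri n' := by
  have hsucc : tri (n + 1) = tri n + (n + 1) := by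
    simp only [tri]; rw [show (n + 1) * (n + 1 + 1) = n * (n + 1) + (n + 1) * 2 by ring]; omega
  have hmono : tri (n + 1) ≤ tri n' := Nat.div_le_div_right (by gcongr <;> omega)
  omega

lemma tri_add_inj {n n' j j' : ℕ} (hj : j ≤ n) (hj' : j' ≤ n') (h : tri n + j = tri n' + j') :
    n = n' ∧ j = j' := by
  rcases lt_trichotomy n n' with hn | rfl | hn
  · have := tri_add_lt_tri hj hn; omega
  · omega
  · have := tri_add_lt_tri hj' hn; omega

lemma two_pow_add_inj {a b k l : ℕ} (hk : k < 2 ^ a) (hl : l < 2 ^ b) (h : 2 ^ a + k = 2 ^ b + l) :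
    a = b ∧ k = l := by
  have hlog : ∀ {a k : ℕ}, k < 2 ^ a → Nat.log 2 (2 ^ a + k) = a := fun hk =>
    Nat.log_eq_of_pow_le_of_lt_pow (Nat.le_add_right _ _) (by rw [pow_succ]; omega)
  obtain rfl : a = b := by rw [← hlog hk, h, hlog hl]
  omega

def dyadicSum (μ : ℕ → ℝ) (m : ℕ) : ℝ := ∑ k ∈ range (2 ^ m), μ (2 ^ m + k)

lemma one_half_le_dyadicSum_inv (m : ℕ) : 1 / 2 ≤ dyadicSum (fun n => (n : ℝ)⁻¹) m :=
  calc (1 / 2 : ℝ) = ∑ k ∈ range (2 ^ m), ((2 : ℝ) ^ (m + 1))⁻¹ := by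
        rw [sum_const, card_range, nsmul_eq_mul, pow_succ]; push_cast; field_simp
    _ ≤ ∑ k ∈ range (2 ^ m), ((2 ^ m + k : ℕ) : ℝ)⁻¹ := sum_le_sum fun k hk => by
        have := mem_range.1 hk
        exact inv_anti₀ (by positivity)
          (by exact_mod_cast (by rw [pow_succ]; omega : 2 ^ m + k ≤ 2 ^ (m + 1)))

lemma exists_le_two_pow_mul_of_le_dyadicSum {μ : ℕ → ℝ} {ε : ℝ} {m : ℕ}
    (h : ε ≤ dyadicSum μ m) : ∃ k < 2 ^ m, ε ≤ 2 ^ m * μ (2 ^ m + k) := by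
  obtain ⟨k, hk, hle⟩ := exists_le_of_sum_le (s := range (2 ^ m)) (f := fun _ => ε / 2 ^ m)
    (g := fun k => μ (2 ^ m + k)) (nonempty_range_iff.2 (by positivity)) (by
      rw [sum_const, card_range, nsmul_eq_mul]; push_cast; field_simp; exact h)
  exact ⟨k, mem_range.1 hk, by rwa [div_le_iff₀' (by positivity)] at hle⟩

lemma sqrt_add_one_div_le_of_two_pow_le {m : ℝ} {t : ℕ} (hm : 2 ^ t ≤ m) :
    √(m + 1) / m ≤ √2 * √(1 / 2) ^ t := by
  have hm0 : 0 < m := lt_of_lt_of_le (by positivity) hm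
  have hu : 1 ≤ (1 / 2 : ℝ) ^ t * m := by
    rw [one_div_pow, one_div_mul_eq_div, one_le_div (by positivity)]; exact hm
  rw [div_le_iff₀ hm0, Real.sqrt_le_left (by positivity), mul_pow, mul_pow,
    Real.sq_sqrt zero_le_two, ← pow_mul, mul_comm t, pow_mul, Real.sq_sqrt (by norm_num)]
  nlinarith [(one_le_pow₀ one_le_two : (1 : ℝ) ≤ 2 ^ t).trans hm]

lemma sum_range_two_pow_succ_neg_one_pow (d : ℕ) :
    ∑ r ∈ range (2 ^ (d + 1)), (-1 : ℝ) ^ (r / 2 ^ d) = 0 := by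
  have hlow : ∀ r ∈ range (2 ^ d), (-1 : ℝ) ^ (r / 2 ^ d) = 1 := fun r hr => by
    rw [Nat.div_eq_of_lt (mem_range.1 hr), pow_zero]
  have hhigh : ∀ r ∈ range (2 ^ d), (-1 : ℝ) ^ ((2 ^ d + r) / 2 ^ d) = -1 := fun r hr => by
    rw [Nat.add_div_left _ (by positivity), Nat.div_eq_of_lt (mem_range.1 hr), pow_one]
  rw [pow_succ, mul_two, sum_range_add, sum_congr rfl hlow, sum_congr rfl hhigh]
  simp

-- On each period of length `2 ^ (d + 1)` the coarse sign is constant and the fine sign takes both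
-- values equally often.
lemma sum_neg_one_pow_div_mul_neg_one_pow_div {d c : ℕ} (hdc : d < c) (M : ℕ) :
    ∑ k ∈ range (2 ^ (d + 1) * M), (-1 : ℝ) ^ (k / 2 ^ c) * (-1) ^ (k / 2 ^ d) = 0 := by
  induction M with
  | zero => simp
  | succ M ih =>
    have hc : 2 ^ c = 2 ^ (d + 1) * 2 ^ (c - (d + 1)) := by rw [← pow_add]; congr 1; omega
    have hterm : ∀ r ∈ range (2 ^ (d + 1)),
        (-1 : ℝ) ^ ((2 ^ (d + 1) * M + r) / 2 ^ c) * (-1) ^ ((2 ^ (d + 1) * M + r) / 2 ^ d)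
          = (-1) ^ (M / 2 ^ (c - (d + 1))) * (-1) ^ (r / 2 ^ d) := fun r hr => by
      have hhigh : (2 ^ (d + 1) * M + r) / 2 ^ c = M / 2 ^ (c - (d + 1)) := by
        rw [hc, ← Nat.div_div_eq_div_mul, Nat.mul_add_div (by positivity),
          Nat.div_eq_of_lt (mem_range.1 hr), add_zero]
      have hlow : (2 ^ (d + 1) * M + r) / 2 ^ d = 2 * M + r / 2 ^ d := by
        rw [pow_succ, mul_assoc, Nat.mul_add_div (by positivity)]
      rw [hhigh, hlow, pow_add, pow_mul, neg_one_sq, one_pow, one_mul]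
    rw [mul_add_one, sum_range_add, ih, zero_add, sum_congr rfl hterm, ← mul_sum,
      sum_range_two_pow_succ_neg_one_pow, mul_zero]

lemma sum_neg_one_pow_div_two_pow_mul_eq_ite {m m' n : ℕ} (hm : m ≤ n) (hm' : m' ≤ n) :
    ∑ k ∈ range (2 ^ n), (-1 : ℝ) ^ (k / 2 ^ m) * (-1) ^ (k / 2 ^ m') =
      if m = m' then 2 ^ n else 0 := by
  have horth : ∀ {d c : ℕ}, d < c → c ≤ n →
      ∑ k ∈ range (2 ^ n), (-1 : ℝ) ^ (k / 2 ^ c) * (-1) ^ (k / 2 ^ d) = 0 := fun {d c} hdc hc => by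
    rw [show n = (d + 1) + (n - (d + 1)) by omega, pow_add]
    exact sum_neg_one_pow_div_mul_neg_one_pow_div hdc _
  rcases lt_trichotomy m m' with h | rfl | h
  · rw [if_neg h.ne, ← horth h hm']
    exact sum_congr rfl fun _ _ => mul_comm _ _
  · simp [← pow_add, ← two_mul, pow_mul]
  · rw [if_neg h.ne', horth h hm]

lemma sum_abs_sum_neg_one_pow_le {n : ℕ} {S : Finset ℕ} (hS : ∀ j ∈ S, j ≤ n) :
    ∑ k ∈ range (2 ^ n), |∑ j ∈ S, (-1 : ℝ) ^ (k / 2 ^ (n - j))| ≤ √(#S) * 2 ^ n := by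
  have horth : ∑ k ∈ range (2 ^ n), (∑ j ∈ S, (-1 : ℝ) ^ (k / 2 ^ (n - j))) ^ 2 = #S * 2 ^ n := by
    simp_rw [sq, sum_mul_sum]
    rw [sum_comm]
    refine (sum_congr rfl fun a ha => ?_).trans (by rw [sum_const, nsmul_eq_mul])
    rw [sum_comm]
    simp_rw [sum_neg_one_pow_div_two_pow_mul_eq_ite (Nat.sub_le n a) (Nat.sub_le n _)]
    rw [sum_congr rfl fun b hb => if_congr (show n - a = n - b ↔ a = b by
      have := hS a ha; have := hS b hb; omega) rfl rfl, sum_ite_eq, if_pos ha]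
  have hCS := sq_sum_le_card_mul_sum_sq (s := range (2 ^ n))
    (f := fun k => |∑ j ∈ S, (-1 : ℝ) ^ (k / 2 ^ (n - j))|)
  simp only [sq_abs, horth, card_range, Nat.cast_pow, Nat.cast_ofNat] at hCS
  rw [← pow_le_pow_iff_left₀ (by positivity) (by positivity) two_ne_zero, mul_pow,
    Real.sq_sqrt (by positivity)]
  linarith

def coordBlock (n : ℕ) : Finset ℕ := Ico (2 ^ n - 1) (2 ^ (n + 1) - 1)

lemma sum_coordBlock {M : Type*} [AddCommMonoid M] (n : ℕ) (f : ℕ → M) :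
    ∑ m ∈ coordBlock n, f m = ∑ k ∈ range (2 ^ n), f (2 ^ n - 1 + k) := by
  rw [coordBlock, sum_Ico_eq_sum_range, pow_succ]
  congr 2
  have := Nat.one_le_two_pow (n := n)
  omega

lemma disjoint_coordBlock {n n' : ℕ} (h : n ≠ n') : Disjoint (coordBlock n) (coordBlock n') := by
  wlog hlt : n < n' generalizing n n'
  · exact (this h.symm (by omega)).symm
  have : 2 ^ (n + 1) ≤ 2 ^ n' := Nat.pow_le_pow_right two_pos hlt
  simp only [coordBlock, disjoint_left, mem_Ico]
  omega

structure IsRademacherSystem (x : ℕ → ℓ¹) : Prop where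
  apply_eq : ∀ n : ℕ, 1 ≤ n → ∀ j : ℕ, j ≤ n → ∀ k : ℕ, k < 2 ^ n →
    (x (tri n + j) : ℕ → ℝ) (2 ^ n - 1 + k) = (-1 : ℝ) ^ (k / 2 ^ (n - j)) / ((n : ℝ) * 2 ^ n)
  apply_eq_zero : ∀ n : ℕ, 1 ≤ n → ∀ j : ℕ, j ≤ n → ∀ m : ℕ,
    (m < 2 ^ n - 1 ∨ 2 ^ (n + 1) - 1 ≤ m) → (x (tri n + j) : ℕ → ℝ) m = 0

namespace IsRademacherSystem

variable {x : ℕ → ℓ¹}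

lemma apply_eq_zero_of_notMem (hx : IsRademacherSystem x) {n j m : ℕ} (hn : 1 ≤ n)
    (hj : j ≤ n) (hm : m ∉ coordBlock n) : (x (tri n + j) : ℕ → ℝ) m = 0 :=
  hx.apply_eq_zero n hn j hj m (by simp only [coordBlock, mem_Ico] at hm; omega)

lemma norm_sum_block_le (hx : IsRademacherSystem x) {n : ℕ} (hn : 1 ≤ n) {S : Finset ℕ}
    (hS : ∀ j ∈ S, j ≤ n) : ‖∑ j ∈ S, x (tri n + j)‖ ≤ √(n + 1) / n := by
  have hcard : (#S : ℝ) ≤ n + 1 := by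
    exact_mod_cast (card_le_card fun j hj => mem_range.2 (Nat.lt_succ_of_le (hS j hj))).trans
      (card_range _).le
  have hn' : (0 : ℝ) < n := by exact_mod_cast hn
  have hcoord : ∀ m, ⇑(∑ j ∈ S, x (tri n + j)) m = ∑ j ∈ S, (x (tri n + j) : ℕ → ℝ) m :=
    fun m => by rw [lp.coeFn_sum, Finset.sum_apply]
  have hval : ∀ k ∈ range (2 ^ n), ‖⇑(∑ j ∈ S, x (tri n + j)) (2 ^ n - 1 + k)‖ =
      |∑ j ∈ S, (-1 : ℝ) ^ (k / 2 ^ (n - j))| / (n * 2 ^ n) := fun k hk => by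
    rw [hcoord, sum_congr rfl fun j hj => hx.apply_eq n hn j (hS j hj) k (mem_range.1 hk),
      ← sum_div, Real.norm_eq_abs, abs_div, abs_of_pos (mul_pos hn' (by positivity))]
  rw [lp.norm_eq_sum_norm_of_support_subset _ (s := coordBlock n) fun m hm => by
      rw [hcoord]; exact sum_eq_zero fun j hj => hx.apply_eq_zero_of_notMem hn (hS j hj) hm,
    sum_coordBlock, sum_congr rfl hval, ← sum_div, div_le_div_iff₀ (by positivity) (by positivity)]
  calc (∑ k ∈ range (2 ^ n), |∑ j ∈ S, (-1 : ℝ) ^ (k / 2 ^ (n - j))|) * n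
      ≤ √(#S) * 2 ^ n * n := by gcongr; exact sum_abs_sum_neg_one_pow_le hS
    _ = √(#S) * (n * 2 ^ n) := by ring
    _ ≤ √(n + 1) * (n * 2 ^ n) := by gcongr

lemma sum_inv_le_norm_sum_selector (hx : IsRademacherSystem x) {F : Finset ℕ} (hF : ∀ n ∈ F, 1 ≤ n)
    {sel : ℕ → ℕ} (hsel : ∀ n ∈ F, sel n ≤ n) :
    ∑ n ∈ F, (n : ℝ)⁻¹ ≤ ‖∑ n ∈ F, x (tri n + sel n)‖ := by
  set f := ∑ n ∈ F, x (tri n + sel n)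
  have hcoord : ∀ n ∈ F, ∀ m ∈ coordBlock n, f m = (x (tri n + sel n) : ℕ → ℝ) m := by
    intro n hn m hm
    rw [lp.coeFn_sum, Finset.sum_apply]
    exact sum_eq_single_of_mem n hn fun n' hn' hne => hx.apply_eq_zero_of_notMem (hF n' hn')
      (hsel n' hn') (disjoint_left.1 (disjoint_coordBlock hne.symm) hm)
  have hblock : ∀ n ∈ F, ∑ m ∈ coordBlock n, ‖f m‖ = (n : ℝ)⁻¹ := by
    intro n hn
    have hn' : (0 : ℝ) < n := by exact_mod_cast hF n hn
    rw [sum_congr rfl fun m hm => by rw [hcoord n hn m hm], sum_coordBlock,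
      sum_congr rfl fun k hk => by rw [hx.apply_eq n (hF n hn) _ (hsel n hn) k (mem_range.1 hk)]]
    simp only [norm_div, norm_pow, norm_neg, norm_one, one_pow, sum_const, card_range,
      nsmul_eq_mul, Nat.cast_pow, Nat.cast_ofNat, Real.norm_eq_abs,
      abs_of_pos (mul_pos hn' (by positivity : (0 : ℝ) < 2 ^ n))]
    field_simp
  calc ∑ n ∈ F, (n : ℝ)⁻¹ = ∑ n ∈ F, ∑ m ∈ coordBlock n, ‖f m‖ := (sum_congr rfl hblock).symm
    _ = ∑ m ∈ F.biUnion coordBlock, ‖f m‖ :=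
      (sum_biUnion fun _ _ _ _ h => disjoint_coordBlock h).symm
    _ ≤ ‖f‖ := lp.sum_norm_le_norm f _

lemma summable_blocks (hx : IsRademacherSystem x) {n : ℕ → ℕ} (hn : ∀ t, 2 ^ t ≤ n t) :
    Summable fun p : Σ t, Fin (n t + 1) => x (tri (n p.1) + p.2) := by
  have hr : √(1 / 2 : ℝ) < 1 := by rw [Real.sqrt_lt' one_pos]; norm_num
  refine summable_sigma_of_norm_sum_le
    ((summable_geometric_of_lt_one (Real.sqrt_nonneg _) hr).mul_left √2) fun t s => ?_
  have hS : ∀ j ∈ s.map Fin.valEmbedding, j ≤ n t := fun j hj => by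
    obtain ⟨k, -, rfl⟩ := mem_map.1 hj
    exact Nat.lt_succ_iff.1 k.isLt
  calc ‖∑ k ∈ s, x (tri (n t) + k)‖ = ‖∑ j ∈ s.map Fin.valEmbedding, x (tri (n t) + j)‖ := by
        rw [sum_map]; rfl
    _ ≤ √(n t + 1) / n t := hx.norm_sum_block_le (Nat.one_le_two_pow.trans (hn t)) hS
    _ ≤ √2 * √(1 / 2) ^ t := sqrt_add_one_div_le_of_two_pow_le (by exact_mod_cast hn t)

lemma not_summable_selectors (hx : IsRademacherSystem x) {sel : ℕ → ℕ} (hsel : ∀ n, sel n ≤ n)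
    (φ : ℕ → ℕ) :
    ¬ Summable fun p : Σ t, Fin (2 ^ φ t) => x (tri (2 ^ φ p.1 + p.2) + sel (2 ^ φ p.1 + p.2)) := by
  intro h
  obtain ⟨t, ht⟩ := ((tendsto_zero_iff_norm_tendsto_zero.1 h.sigma.tendsto_atTop_zero).eventually
    (gt_mem_nhds one_half_pos)).exists
  refine (one_half_le_dyadicSum_inv (φ t)).not_gt (lt_of_le_of_lt ?_ ht)
  set F := (range (2 ^ φ t)).map (addLeftEmbedding (2 ^ φ t))
  calc dyadicSum (fun n => (n : ℝ)⁻¹) (φ t) = ∑ n ∈ F, (n : ℝ)⁻¹ := by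
        rw [sum_map]; rfl
    _ ≤ ‖∑ n ∈ F, x (tri n + sel n)‖ := hx.sum_inv_le_norm_sum_selector (fun n hn => by
        obtain ⟨k, -, rfl⟩ := mem_map.1 hn
        exact Nat.one_le_two_pow.trans (Nat.le_add_right _ _)) fun n _ => hsel n
    _ = _ := by
      rw [sum_map, tsum_fintype,
        Fin.sum_univ_eq_sum_range (fun k => x (tri (2 ^ φ t + k) + sel (2 ^ φ t + k)))]
      rfl

lemma exists_frequently_le_dyadicSum (hx : IsRademacherSystem x) {g : ℕ → ℝ}
    (hxg : SummableSetsEq x g) (hg0 : ∀ i, 0 ≤ g i) {sel : ℕ → ℕ} (hsel : ∀ n, sel n ≤ n) :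
    ∃ ε > 0, ∃ᶠ m in atTop, ε ≤ dyadicSum (fun n => g (tri n + sel n)) m := by
  by_contra! hσ
  obtain ⟨φ, hφ, hσφ⟩ := extraction_forall_of_eventually fun t => hσ ((1 / 2) ^ t) (by positivity)
  refine hx.not_summable_selectors hsel φ ((hxg.summable_comp_iff ?_).2 ?_)
  · rintro ⟨t, k⟩ ⟨t', k'⟩ h
    obtain ⟨hn, -⟩ := tri_add_inj (hsel _) (hsel _) h
    obtain ⟨hφt, hk⟩ := two_pow_add_inj k.isLt k'.isLt hn
    obtain rfl := hφ.injective hφt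
    exact Sigma.ext rfl (heq_of_eq (Fin.ext hk))
  · refine (summable_sigma_of_nonneg fun _ => hg0 _).2 ⟨fun _ => .of_finite,
      summable_geometric_two.of_nonneg_of_le (fun _ => tsum_nonneg fun _ => hg0 _) fun t => ?_⟩
    rw [tsum_fintype, Fin.sum_univ_eq_sum_range
      (fun k => g (tri (2 ^ φ t + k) + sel (2 ^ φ t + k)))]
    exact (hσφ t).le

lemma not_frequently_le_dyadicSum (hx : IsRademacherSystem x) {g : ℕ → ℝ}
    (hxg : SummableSetsEq x g) (hg0 : ∀ i, 0 ≤ g i) {sel : ℕ → ℕ}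
    (hmin : ∀ n j, j ≤ n → g (tri n + sel n) ≤ g (tri n + j)) {ε : ℝ} (hε : 0 < ε) :
    ¬ ∃ᶠ m in atTop, ε ≤ dyadicSum (fun n => g (tri n + sel n)) m := by
  intro hfreq
  obtain ⟨φ, hφ, hσφ⟩ := extraction_of_frequently_atTop hfreq
  choose k hk hheavy using fun t => exists_le_two_pow_mul_of_le_dyadicSum (hσφ t)
  set n : ℕ → ℕ := fun t => 2 ^ φ t + k t
  have hblocks := (hxg.summable_comp_iff ?_).1 (hx.summable_blocks (n := n) fun t =>
    (Nat.pow_le_pow_right two_pos hφ.le_apply).trans (Nat.le_add_right _ _))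
  · obtain ⟨t, ht⟩ := ((summable_sigma_of_nonneg fun _ => hg0 _).1 hblocks).2.tendsto_atTop_zero
      |>.eventually (gt_mem_nhds hε) |>.exists
    refine ht.not_ge ?_
    rw [tsum_fintype]
    calc ε ≤ 2 ^ φ t * g (tri (n t) + sel (n t)) := hheavy t
      _ ≤ ∑ _j : Fin (n t + 1), g (tri (n t) + sel (n t)) := by
          rw [sum_const, card_univ, Fintype.card_fin, nsmul_eq_mul]
          gcongr
          · exact hg0 _
          · push_cast [n]; linarith
      _ ≤ _ := sum_le_sum fun j _ => hmin _ _ (Nat.lt_succ_iff.1 j.isLt)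
  · rintro ⟨t, j⟩ ⟨t', j'⟩ h
    obtain ⟨hn, hj⟩ := tri_add_inj (Nat.lt_succ_iff.1 j.isLt) (Nat.lt_succ_iff.1 j'.isLt) h
    obtain rfl := hφ.injective (two_pow_add_inj (hk t) (hk t') hn).1
    exact Sigma.ext rfl (heq_of_eq (Fin.ext hj))

end IsRademacherSystem

theorem stmt19_general (x : ℕ → lp (fun _ : ℕ => ℝ) 1)
    (hx : ∀ n : ℕ, 1 ≤ n → ∀ j : ℕ, j ≤ n → ∀ k : ℕ, k < 2 ^ n →
      (x (n * (n + 1) / 2 + j) : ℕ → ℝ) (2 ^ n - 1 + k) =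
        (-1 : ℝ) ^ (k / 2 ^ (n - j)) / ((n : ℝ) * 2 ^ n))
    (hxsupp : ∀ n : ℕ, 1 ≤ n → ∀ j : ℕ, j ≤ n → ∀ m : ℕ,
      (m < 2 ^ n - 1 ∨ 2 ^ (n + 1) - 1 ≤ m) →
      (x (n * (n + 1) / 2 + j) : ℕ → ℝ) m = 0) :
    ¬ ∃ g : ℕ → ℝ, (∀ i : ℕ, 0 ≤ g i) ∧
      ∀ X : Set ℕ,
        Summable (fun i : X => x i) ↔ Summable (fun i : X => g i) := by
  rintro ⟨g, hg0, hxg⟩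
  have hR : IsRademacherSystem x := ⟨hx, hxsupp⟩
  have hmin : ∀ n, ∃ j ≤ n, ∀ j' ≤ n, g (tri n + j) ≤ g (tri n + j') := fun n => by
    obtain ⟨j, hj, hjmin⟩ := (range (n + 1)).exists_min_image (fun j => g (tri n + j))
      (nonempty_range_iff.2 n.succ_ne_zero)
    exact ⟨j, Nat.lt_succ_iff.1 (mem_range.1 hj),
      fun j' hj' => hjmin j' (mem_range.2 (Nat.lt_succ_of_le hj'))⟩
  choose sel hsel hmin using hmin
  obtain ⟨ε, hε, hfreq⟩ := hR.exists_frequently_le_dyadicSum hxg hg0 hsel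
  exact hR.not_frequently_le_dyadicSum hxg hg0 hmin hε hfreq

/-- the Rademacher ideal `J_R = {X : ∑_{i∈X} x i converges unconditionally
in ℓ₁}`, where `x : ℕ → ℓ₁` is the Rademacher-type sequence (described by the hypotheses
`hx0`, `hx`, `hxsupp`), is not a summable ideal. -/
theorem stmt19 (x : ℕ → lp (fun _ : ℕ => ℝ) 1)
    (hx0 : ∀ k : ℕ, (x 0 : ℕ → ℝ) k = if k = 0 then 1 else 0)
    (hx : ∀ n : ℕ, 1 ≤ n → ∀ j : ℕ, j ≤ n → ∀ k : ℕ, k < 2 ^ n →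
      (x (n * (n + 1) / 2 + j) : ℕ → ℝ) (2 ^ n - 1 + k) =
        (-1 : ℝ) ^ (k / 2 ^ (n - j)) / ((n : ℝ) * 2 ^ n))
    (hxsupp : ∀ n : ℕ, 1 ≤ n → ∀ j : ℕ, j ≤ n → ∀ m : ℕ,
      (m < 2 ^ n - 1 ∨ 2 ^ (n + 1) - 1 ≤ m) →
      (x (n * (n + 1) / 2 + j) : ℕ → ℝ) m = 0) :
    ¬ ∃ g : ℕ → ℝ, (∀ i : ℕ, 0 ≤ g i) ∧
      ∀ X : Set ℕ,
        Summable (fun i : X => x i) ↔ Summable (fun i : X => g i) :=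
  stmt19_general x hx hxsupp
end
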